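/- arXiv:1902.08069 — 4 statements merged into one kernel-verified Lean document; each statement's English description precedes it below -/
import Mathlib

section
/- If an adversary A is (ρ, σ)-bounded, then for every round t and buffer v, the number of packets injected at round t whose paths contain v satisfies N_{{t}}(v) ≤ ξ^t(v) − ξ^{t−1}(v) + ρ. -/
/-- Sum of injections crossing a fixed buffer over the interval of rounds `[s, t]`. -/
noncomputable def Nsum (N : ℕ → ℕ) (s t : ℕ) : ℝ := ∑ r ∈ Finset.Icc s t, (N r : ℝ)

/-- `(ρ, σ)`-boundedness of the injections crossing a fixed buffer. -/
def Bounded (N : ℕ → ℕ) (ρ : ℝ) (σ : ℕ) : Prop :=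
  ∀ s t : ℕ, s ≤ t → Nsum N s t ≤ ρ * ((t : ℝ) - s + 1) + σ

/-- The excess `ξ^t = max_{s ≤ t} max(N_{[s,t]} - ρ (t - s + 1), 0)`. -/
noncomputable def excess (N : ℕ → ℕ) (ρ : ℝ) (t : ℕ) : ℝ :=
  Finset.sup' (Finset.range (t + 1)) ⟨0, by simp⟩
    (fun s => max (Nsum N s t - ρ * ((t : ℝ) - s + 1)) 0)

/-- The excess at round `t - 1`, with the convention `ξ^{-1} = 0`. -/
noncomputable def excessPrev (N : ℕ → ℕ) (ρ : ℝ) (t : ℕ) : ℝ :=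
  if t = 0 then 0 else excess N ρ (t - 1)

lemma le_excess (N : ℕ → ℕ) (ρ : ℝ) (t s : ℕ) (hs : s ≤ t) :
    Nsum N s t - ρ * ((t : ℝ) - s + 1) ≤ excess N ρ t := by
  unfold excess
  refine le_trans (le_max_left _ 0)
    (Finset.le_sup' (fun s => max (Nsum N s t - ρ * ((t : ℝ) - s + 1)) 0)
      (Finset.mem_range.mpr (Nat.lt_succ_of_le hs)))

lemma Nt_le_excess (N : ℕ → ℕ) (ρ : ℝ) (t : ℕ) :
    (N t : ℝ) - ρ ≤ excess N ρ t := by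
  have h := le_excess N ρ t t le_rfl
  simpa [Nsum, Finset.Icc_self] using h

theorem injections_le_excess_increase (N : ℕ → ℕ) (ρ : ℝ) (σ : ℕ)
    (hA : Bounded N ρ σ) :
    ∀ t : ℕ, (N t : ℝ) ≤ excess N ρ t - excessPrev N ρ t + ρ := by
  intro t
  cases t with
  | zero =>
    have := Nt_le_excess N ρ 0
    simp [excessPrev] at *
    linarith
  | succ t =>
    have hprev : excessPrev N ρ (t + 1) = excess N ρ t := by simp [excessPrev]
    rw [hprev]
    obtain ⟨s, hs, heq⟩ := Finset.exists_mem_eq_sup' (⟨0, by simp⟩ :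
      (Finset.range (t + 1)).Nonempty)
      (fun s => max (Nsum N s t - ρ * ((t : ℝ) - s + 1)) 0)
    have hst : s ≤ t := Nat.lt_succ_iff.mp (Finset.mem_range.mp hs)
    have heq' : excess N ρ t = max (Nsum N s t - ρ * ((t : ℝ) - s + 1)) 0 := heq
    rcases max_cases (Nsum N s t - ρ * ((t : ℝ) - s + 1)) 0 with ⟨h1, _⟩ | ⟨h1, _⟩
    · -- excess t = Nsum s t - ρ(...)
      have hsum : Nsum N s (t + 1) = Nsum N s t + (N (t + 1) : ℝ) := by
        unfold Nsum
        rw [Finset.sum_Icc_succ_top (Nat.le_succ_of_le hst)]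
      have h2 := le_excess N ρ (t + 1) s (Nat.le_succ_of_le hst)
      rw [hsum] at h2
      rw [heq', h1]
      push_cast at h2 ⊢
      linarith
    · -- excess t = 0
      have h2 := Nt_le_excess N ρ (t + 1)
      rw [heq', h1]
      linarith
end

section
/- Single-destination peak-to-sink invariant: consider buffers 0,…,n−1 on a line with loads L : Fin n → ℕ. Suppose forwarding works as follows in a round: let i be the left-most index with L(i) ≥ 2 (if any); every nonempty buffer at index ≥ i forwards one packet to the next buffer (the last buffer's packet leaves the system). Then the total badness B = Σ_i max(L(i) − 1, 0) decreases by at least 1 if it was positive, and forwarding never increases any buffer's load above its prior maximum plus 1. -/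
/-- One PTS forwarding step on a line of `n` buffers, all packets destined past
buffer `n-1`, where every nonempty buffer `j` with `i ≤ j < n` forwards one
packet to buffer `j+1` (packets leaving buffer `n-1` are absorbed). -/
def ptsStep (n i : ℕ) (L : ℕ → ℕ) : ℕ → ℕ := fun j =>
  (L j - (if i ≤ j ∧ j < n ∧ 1 ≤ L j then 1 else 0)) +
    (if 1 ≤ j ∧ j < n ∧ i ≤ j - 1 ∧ 1 ≤ L (j - 1) then 1 else 0)

theorem pts_badness_decrease (n : ℕ) (L : ℕ → ℕ) (i : ℕ)
    (hin : i < n) (hbad : 2 ≤ L i) (hmin : ∀ j, j < i → L j < 2) :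
    (∑ j ∈ Finset.range n, (ptsStep n i L j - 1)) + 1 ≤
        ∑ j ∈ Finset.range n, (L j - 1) ∧
      ∀ j, ptsStep n i L j ≤ L j + 1 := by
  constructor
  · have key : ∀ j ∈ Finset.range n,
        (ptsStep n i L j - 1) + (if j = i then 1 else 0) ≤ L j - 1 := by
      intro j hj
      simp only [Finset.mem_range] at hj
      rcases eq_or_ne j i with rfl | hne
      · simp only [ptsStep]
        split_ifs <;> omega
      · simp only [ptsStep, if_neg hne]
        split_ifs <;> omega
    calc (∑ j ∈ Finset.range n, (ptsStep n i L j - 1)) + 1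
        = ∑ j ∈ Finset.range n, ((ptsStep n i L j - 1) + (if j = i then 1 else 0)) := by
          rw [Finset.sum_add_distrib, Finset.sum_ite_eq' (Finset.range n)]
          simp [Finset.mem_range.mpr hin]
      _ ≤ ∑ j ∈ Finset.range n, (L j - 1) := Finset.sum_le_sum key
  · intro j
    simp only [ptsStep]
    split_ifs <;> omega
end

section
/- PPTS badness decrease lemma (per-destination): let L be a configuration of buffers 0,…,n−1 where each buffer i holds for each destination index k a pseudo-buffer L_k(i) ∈ ℕ (its size). Suppose I_k = [a_k, b_k] is an interval with L_k(a_k) ≥ 2 and b_k < w_k, and let L⁺ be the configuration obtained by each nonempty k-pseudo-buffer in I_k forwarding one packet to the next buffer. Then for the k-badness B_k(i) = Σ_{i' ≤ i} max(L_k(i') − 1, 0), we have B_k⁺(i) ≤ B_k(i) − 1 for i ∈ I_k, and B_k⁺(i) ≤ B_k(i) for i ∉ I_k. -/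
/-- Forwarding for one destination class over the interval `[a, b]` with
destination `w`: each nonempty buffer in `[a, b]` sends one packet right;
packets arriving at the destination `w` are absorbed. -/
def fwdStep (a b w : ℕ) (L : ℕ → ℕ) : ℕ → ℕ := fun i =>
  (L i - (if a ≤ i ∧ i ≤ b ∧ 1 ≤ L i then 1 else 0)) +
    (if 1 ≤ i ∧ a ≤ i - 1 ∧ i - 1 ≤ b ∧ i < w ∧ 1 ≤ L (i - 1) then 1 else 0)

/-- Prefix badness `B(i) = Σ_{i' ≤ i} max(L(i') - 1, 0)`. -/
def prefixBadness (L : ℕ → ℕ) (i : ℕ) : ℕ :=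
  ∑ i' ∈ Finset.range (i + 1), (L i' - 1)

lemma ppts_key (a b w : ℕ) (L : ℕ → ℕ)
    (hab : a ≤ b) (hbw : b < w) (ha : 2 ≤ L a) (i : ℕ) :
    (fwdStep a b w L i - 1) + (if i = a then 1 else 0) ≤
      (L i - 1) + (if i = b + 1 then 1 else 0) := by
  rcases eq_or_ne i a with rfl | hia
  · simp only [fwdStep]
    split_ifs <;> omega
  · simp only [fwdStep]
    split_ifs <;> omega

lemma ppts_sum (a b w : ℕ) (L : ℕ → ℕ)
    (hab : a ≤ b) (hbw : b < w) (ha : 2 ≤ L a) (i : ℕ) :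
    prefixBadness (fwdStep a b w L) i + (if a ≤ i then 1 else 0) ≤
      prefixBadness L i + (if b + 1 ≤ i then 1 else 0) := by
  have h := Finset.sum_le_sum (fun j (_ : j ∈ Finset.range (i + 1)) =>
    ppts_key a b w L hab hbw ha j)
  rw [Finset.sum_add_distrib, Finset.sum_add_distrib,
    Finset.sum_ite_eq' (Finset.range (i + 1)) a (fun _ => 1),
    Finset.sum_ite_eq' (Finset.range (i + 1)) (b + 1) (fun _ => 1)] at h
  simpa [prefixBadness, Finset.mem_range, Nat.lt_succ_iff] using h

theorem ppts_badness_decrease (a b w : ℕ) (L : ℕ → ℕ)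
    (hab : a ≤ b) (hbw : b < w) (ha : 2 ≤ L a) :
    (∀ i, a ≤ i → i ≤ b →
        prefixBadness (fwdStep a b w L) i ≤ prefixBadness L i - 1) ∧
    (∀ i, i < a ∨ b < i →
        prefixBadness (fwdStep a b w L) i ≤ prefixBadness L i) := by
  constructor
  · intro i hai hib
    have h := ppts_sum a b w L hab hbw ha i
    rw [if_pos hai, if_neg (by omega)] at h
    omega
  · intro i hi
    have h := ppts_sum a b w L hab hbw ha i
    rcases hi with hi | hi
    · rw [if_neg (by omega), if_neg (by omega)] at h
      omega
    · rw [if_pos (by omega), if_pos (by omega)] at h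
      omega
end

section
/- Intermediate destination well-definedness: for i < w < m^ℓ, let j be the largest base-m digit position in which i and w differ, and define x(i,w) = ⌊w/m^j⌋·m^j. Then i < x(i,w) ≤ w, and if x(i,w) < w then the largest digit position in which x(i,w) and w differ is strictly less than j. -/
/-!
Numbers below `m ^ ℓ` are determined by their first `ℓ` digits, so `i ≠ w` forces `i` and `w` to
differ at `j = j(i, w)`. Hence `⌊i / m^j⌋ ≠ ⌊w / m^j⌋`, and since `i < w` this gives
`i < (⌊i / m^j⌋ + 1) m^j ≤ x(i, w) ≤ w`. Rounding `w` down to a multiple of `m^j` keeps all its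
digits from position `j` on, so if `x(i, w) ≠ w` they first differ below `j`.
-/

/-- The `j`-th base-`m` digit of `i`. -/
def digit (m j i : ℕ) : ℕ := (i / m ^ j) % m

/-- The largest base-`m` digit position (below `ℓ`) in which `i` and `w` differ. -/
def topDiff (m ℓ i w : ℕ) : ℕ :=
  Nat.findGreatest (fun j => digit m j i ≠ digit m j w) ℓ

/-- The intermediate destination `x(i, w) = ⌊w / m^{j(i,w)}⌋ · m^{j(i,w)}`. -/
def interDest (m ℓ i w : ℕ) : ℕ :=
  (w / m ^ topDiff m ℓ i w) * m ^ topDiff m ℓ i w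

section Digits

variable {m ℓ a b w : ℕ}

theorem div_pow_eq_div_pow_succ_mul_add_digit (m k a : ℕ) :
    a / m ^ k = a / m ^ (k + 1) * m + digit m k a := by
  rw [pow_succ, ← Nat.div_div_eq_div_mul, digit, Nat.div_add_mod']

theorem div_pow_eq_of_digit_eq {k : ℕ} (n : ℕ) (hn : a / m ^ (k + n) = b / m ^ (k + n))
    (h : ∀ t < n, digit m (k + t) a = digit m (k + t) b) : a / m ^ k = b / m ^ k := by
  induction n generalizing k with
  | zero => simpa using hn
  | succ n ih =>
    have hquot : a / m ^ (k + 1) = b / m ^ (k + 1) :=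
      ih (by rwa [Nat.add_right_comm, Nat.add_assoc])
        fun t ht => by rw [Nat.add_right_comm, Nat.add_assoc]; exact h (t + 1) (by omega)
    have hdigit : digit m k a = digit m k b := h 0 n.succ_pos
    rw [div_pow_eq_div_pow_succ_mul_add_digit m k a, div_pow_eq_div_pow_succ_mul_add_digit m k b,
      hquot, hdigit]

theorem eq_of_digit_eq (ha : a < m ^ ℓ) (hb : b < m ^ ℓ)
    (h : ∀ k < ℓ, digit m k a = digit m k b) : a = b := by
  have hquot : a / m ^ (0 + ℓ) = b / m ^ (0 + ℓ) := by
    rw [Nat.zero_add, Nat.div_eq_of_lt ha, Nat.div_eq_of_lt hb]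
  simpa using div_pow_eq_of_digit_eq ℓ hquot fun t ht => by simpa using h t ht

theorem digit_div_pow_mul_pow (hm : 0 < m) {j k : ℕ} (hjk : j ≤ k) :
    digit m k (w / m ^ j * m ^ j) = digit m k w := by
  have hsplit : m ^ k = m ^ j * m ^ (k - j) := by rw [← pow_add, Nat.add_sub_cancel' hjk]
  rw [digit, digit, hsplit, ← Nat.div_div_eq_div_mul, ← Nat.div_div_eq_div_mul,
    Nat.mul_div_cancel _ (pow_pos hm j)]

end Digits

section TopDiff

variable {m ℓ i w : ℕ}

theorem digit_topDiff_ne (hi : i < m ^ ℓ) (hw : w < m ^ ℓ) (hne : i ≠ w) :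
    digit m (topDiff m ℓ i w) i ≠ digit m (topDiff m ℓ i w) w := by
  intro htop
  refine hne (eq_of_digit_eq hi hw fun k hk => ?_)
  by_contra hdiff
  exact Nat.findGreatest_spec (P := fun j => digit m j i ≠ digit m j w) hk.le hdiff htop

theorem lt_interDest (hm : 0 < m) (hiw : i < w) (hw : w < m ^ ℓ) : i < interDest m ℓ i w := by
  set j := topDiff m ℓ i w
  have hne : i / m ^ j ≠ w / m ^ j := fun h =>
    digit_topDiff_ne (hiw.trans hw) hw hiw.ne (by rw [digit, digit, h])
  have hlt : i / m ^ j < w / m ^ j := (Nat.div_le_div_right hiw.le).lt_of_ne hne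
  calc i < (i / m ^ j + 1) * m ^ j := by
        rw [add_one_mul]; exact Nat.lt_div_mul_add (pow_pos hm j)
    _ ≤ w / m ^ j * m ^ j := Nat.mul_le_mul_right _ hlt
    _ = interDest m ℓ i w := rfl

theorem topDiff_interDest_lt (hm : 0 < m) (hw : w < m ^ ℓ) (hne : interDest m ℓ i w ≠ w) :
    topDiff m ℓ (interDest m ℓ i w) w < topDiff m ℓ i w := by
  have hx : interDest m ℓ i w < m ^ ℓ := (Nat.div_mul_le_self _ _).trans_lt hw
  by_contra! hle
  exact digit_topDiff_ne hx hw hne (digit_div_pow_mul_pow hm hle)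

end TopDiff

theorem interDest_wellDefined_general (m ℓ i w : ℕ) (hm : 2 ≤ m)
    (hiw : i < w) (hw : w < m ^ ℓ) :
    i < interDest m ℓ i w ∧ interDest m ℓ i w ≤ w ∧
      (interDest m ℓ i w ≠ w →
        topDiff m ℓ (interDest m ℓ i w) w < topDiff m ℓ i w) := by
  have hm₀ : 0 < m := by omega
  exact ⟨lt_interDest hm₀ hiw hw, Nat.div_mul_le_self _ _, topDiff_interDest_lt hm₀ hw⟩

theorem interDest_wellDefined (m ℓ i w : ℕ) (hm : 2 ≤ m) (hℓ : 1 ≤ ℓ)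
    (hiw : i < w) (hw : w < m ^ ℓ) :
    i < interDest m ℓ i w ∧ interDest m ℓ i w ≤ w ∧
      (interDest m ℓ i w ≠ w →
        topDiff m ℓ (interDest m ℓ i w) w < topDiff m ℓ i w) :=
  interDest_wellDefined_general m ℓ i w hm hiw hw
end
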